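/- arXiv:2506.12151 — 2 statements merged into one kernel-verified Lean document; each statement's English description precedes it below -/
import Mathlib

section
/- Let H be a finite simple graph with vertex set {v_1, …, v_k} and let a_1, …, a_k be positive integers. Let H'(a_1, …, a_k) be the blow-up of H, i.e., the graph with vertex set {(v_i, j) : i ∈ [k], j ∈ [a_i]} in which (v_{i_1}, j_1) and (v_{i_2}, j_2) are adjacent if and only if v_{i_1}v_{i_2} is an edge of H. Then for every finite simple graph T with at least one vertex, t(H'(a_1, …, a_k), T) ≥ t(H, T)^{a_1 a_2 ⋯ a_k}. -/
open SimpleGraph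

/-- The homomorphism density `t(G,T)`. -/
noncomputable def homDensity {α β : Type*} [Fintype α] [Fintype β]
    (G : SimpleGraph α) (T : SimpleGraph β) : ℝ :=
  (Nat.card (G →g T) : ℝ) / (Fintype.card β : ℝ) ^ (Fintype.card α)

/-- The blow-up `H'(a_1, …, a_k)` of a graph. -/
def blowup {α : Type*} (G : SimpleGraph α) (a : α → ℕ) :
    SimpleGraph (Σ i : α, Fin (a i)) where
  Adj x y := G.Adj x.1 y.1
  symm := ⟨fun _ _ h => G.adj_symm h⟩
  loopless := ⟨fun x h => G.irrefl (v := x.1) h⟩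

open SimpleGraph Finset

section Aux

variable {α β γ : Type*} [Fintype α] [Fintype β] [Fintype γ]

lemma homDensity_nonneg (G : SimpleGraph α) (T : SimpleGraph β) :
    0 ≤ homDensity G T := by
  unfold homDensity
  positivity

lemma homDensity_eq_of_iso {G : SimpleGraph α} {G' : SimpleGraph β}
    (T : SimpleGraph γ) (e : G ≃g G') :
    homDensity G T = homDensity G' T := by
  have h1 : Nat.card (G →g T) = Nat.card (G' →g T) := Nat.card_congr
    { toFun := fun f => f.comp e.symm.toHom
      invFun := fun f => f.comp e.toHom
      left_inv := fun f => by
        ext x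
        simp [Hom.comp]
      right_inv := fun f => by
        ext x
        simp [Hom.comp] }
  have h2 : Fintype.card α = Fintype.card β := Fintype.card_congr e.toEquiv
  unfold homDensity
  rw [h1, h2]

def blowupOneIso (G : SimpleGraph α) (a : α → ℕ) (h : ∀ i, a i = 1) :
    blowup G a ≃g G where
  toFun x := x.1
  invFun i := ⟨i, ⟨0, by rw [h i]; exact Nat.zero_lt_one⟩⟩
  left_inv x := by
    obtain ⟨i, p⟩ := x
    have hp : p = ⟨0, by rw [h i]; exact Nat.zero_lt_one⟩ :=
      Fin.ext (by have h2 := p.2; have h1 := h i; simp only [h1] at h2; omega)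
    show (⟨i, ⟨0, _⟩⟩ : Σ i, Fin (a i)) = ⟨i, p⟩
    rw [hp]
  right_inv i := rfl
  map_rel_iff' := Iff.rfl

end Aux
section Key

open scoped Classical

variable {α β : Type*} [Fintype α] [Fintype β]
variable (G : SimpleGraph α) (T : SimpleGraph β) (i0 : α) (b : {j : α // j ≠ i0} → ℕ)

/-- extend `b` to all of `α`, with value `m` at `i0`. -/
def extFun [DecidableEq α] (m : ℕ) : α → ℕ := fun i => if h : i = i0 then m else b ⟨i, h⟩

def Qprop (w : (j : {j : α // j ≠ i0}) → Fin (b j) → β) : Prop :=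
  ∀ j j' : {j : α // j ≠ i0}, G.Adj j.1 j'.1 → ∀ p q, T.Adj (w j p) (w j' q)

def Cprop (w : (j : {j : α // j ≠ i0}) → Fin (b j) → β) (x : β) : Prop :=
  ∀ j : {j : α // j ≠ i0}, G.Adj i0 j.1 → ∀ q, T.Adj x (w j q)

variable [DecidableEq α]

def homSubtypeEquiv {V : Type*} (H : SimpleGraph V) :
    (H →g T) ≃ {f : V → β // ∀ ⦃x y⦄, H.Adj x y → T.Adj (f x) (f y)} where
  toFun f := ⟨f.toFun, fun _ _ h => f.map_rel' h⟩
  invFun f := ⟨f.1, fun h => f.2 h⟩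
  left_inv f := rfl
  right_inv f := rfl

noncomputable def homBlowupEquiv (m : ℕ) :
    (blowup G (extFun i0 b m) →g T) ≃
      Σ w : (j : {j : α // j ≠ i0}) → Fin (b j) → β,
        {v : Fin m → β // Qprop G T i0 b w ∧ ∀ p, Cprop G T i0 b w (v p)} := by
  have hA0 : extFun i0 b m i0 = m := dif_pos rfl
  have hAj : ∀ j : {j : α // j ≠ i0}, extFun i0 b m j.1 = b j := fun j => dif_neg j.2
  refine (homSubtypeEquiv T _).trans (Equiv.trans (Equiv.subtypeEquiv
    ((Equiv.piCurry fun i (_ : Fin (extFun i0 b m i)) => β).trans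
      ((Equiv.piSplitAt i0 fun i => Fin (extFun i0 b m i) → β).trans
        ((Equiv.prodCongr (Equiv.arrowCongr (finCongr hA0) (Equiv.refl β))
          (Equiv.piCongrRight fun j => Equiv.arrowCongr (finCongr (hAj j)) (Equiv.refl β))).trans
          (Equiv.prodComm _ _)))) ?_)
    (Equiv.subtypeProdEquivSigmaSubtype fun w (v : Fin m → β) =>
      Qprop G T i0 b w ∧ ∀ p, Cprop G T i0 b w (v p)))
  intro f
  constructor
  · intro hf
    constructor
    · intro j j' hadj p q
      exact hf (show (blowup G (extFun i0 b m)).Adj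
        ⟨j.1, Fin.cast (hAj j).symm p⟩ ⟨j'.1, Fin.cast (hAj j').symm q⟩ from hadj)
    · intro p j hadj q
      exact hf (show (blowup G (extFun i0 b m)).Adj
        ⟨i0, Fin.cast hA0.symm p⟩ ⟨j.1, Fin.cast (hAj j).symm q⟩ from hadj)
  · rintro ⟨hQ, hC⟩ ⟨i, p⟩ ⟨j, q⟩ hadj
    have hadj' : G.Adj i j := hadj
    by_cases hi : i = i0 <;> by_cases hj : j = i0
    · subst hi; subst hj; exact absurd hadj' (G.irrefl)
    · subst hi
      exact hC (Fin.cast hA0 p) ⟨j, hj⟩ hadj' (Fin.cast (hAj ⟨j, hj⟩) q)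
    · subst hj
      exact T.adj_symm (hC (Fin.cast hA0 q) ⟨i, hi⟩ (G.adj_symm hadj') (Fin.cast (hAj ⟨i, hi⟩) p))
    · exact hQ ⟨i, hi⟩ ⟨j, hj⟩ hadj' (Fin.cast (hAj ⟨i, hi⟩) p) (Fin.cast (hAj ⟨j, hj⟩) q)

lemma card_fiber (w : (j : {j : α // j ≠ i0}) → Fin (b j) → β) {m : ℕ} (hm : m ≠ 0) :
    Nat.card {v : Fin m → β // Qprop G T i0 b w ∧ ∀ p, Cprop G T i0 b w (v p)}
      = (Nat.card {x : β // Qprop G T i0 b w ∧ Cprop G T i0 b w x}) ^ m := by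
  by_cases hq : Qprop G T i0 b w
  · have e1 : {v : Fin m → β // Qprop G T i0 b w ∧ ∀ p, Cprop G T i0 b w (v p)}
        ≃ (Fin m → {x : β // Cprop G T i0 b w x}) :=
      (Equiv.subtypeEquiv (Equiv.refl _) (fun v => by simp [hq])).trans
        Equiv.subtypePiEquivPi
    have e2 : {x : β // Qprop G T i0 b w ∧ Cprop G T i0 b w x}
        ≃ {x : β // Cprop G T i0 b w x} :=
      Equiv.subtypeEquiv (Equiv.refl _) (fun x => by simp [hq])
    rw [Nat.card_congr e1, Nat.card_congr e2, Nat.card_fun]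
    simp
  · have h1 : IsEmpty {v : Fin m → β // Qprop G T i0 b w ∧ ∀ p, Cprop G T i0 b w (v p)} :=
      ⟨fun v => hq v.2.1⟩
    have h2 : IsEmpty {x : β // Qprop G T i0 b w ∧ Cprop G T i0 b w x} :=
      ⟨fun x => hq x.2.1⟩
    rw [Nat.card_of_isEmpty, Nat.card_of_isEmpty, zero_pow hm]

lemma card_hom_blowup {m : ℕ} (hm : m ≠ 0) :
    Nat.card (blowup G (extFun i0 b m) →g T)
      = ∑ w : (j : {j : α // j ≠ i0}) → Fin (b j) → β,
          (Nat.card {x : β // Qprop G T i0 b w ∧ Cprop G T i0 b w x}) ^ m := by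
  rw [Nat.card_congr (homBlowupEquiv G T i0 b m), Nat.card_eq_fintype_card,
    Fintype.card_sigma]
  refine Finset.sum_congr rfl fun w _ => ?_
  rw [← Nat.card_eq_fintype_card]
  exact card_fiber G T i0 b w hm

lemma card_vertices_ext (m : ℕ) :
    Fintype.card (Σ i : α, Fin (extFun i0 b m i)) = m + ∑ j : {j : α // j ≠ i0}, b j := by
  rw [Fintype.card_sigma]
  simp only [Fintype.card_fin]
  rw [Fintype.sum_eq_add_sum_compl i0]
  congr 1
  · exact dif_pos rfl
  · rw [Finset.sum_subtype (p := fun j => j ≠ i0) {i0}ᶜ (fun x => by simp) (extFun i0 b m)]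
    exact Finset.sum_congr rfl fun j _ => dif_neg j.2

lemma prod_ext (m : ℕ) :
    ∏ i : α, extFun i0 b m i = m * ∏ j : {j : α // j ≠ i0}, b j := by
  rw [Fintype.prod_eq_mul_prod_compl i0]
  congr 1
  · exact dif_pos rfl
  · rw [Finset.prod_subtype (p := fun j => j ≠ i0) {i0}ᶜ (fun x => by simp) (extFun i0 b m)]
    exact Finset.prod_congr rfl fun j _ => dif_neg j.2

lemma key [Nonempty β] {m : ℕ} (hm : 1 ≤ m) :
    homDensity (blowup G (extFun i0 b 1)) T ^ m
      ≤ homDensity (blowup G (extFun i0 b m)) T := by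
  obtain ⟨k, rfl⟩ : ∃ k, m = k + 1 := ⟨m - 1, (Nat.succ_pred_eq_of_pos hm).symm⟩
  set sb := ∑ j : {j : α // j ≠ i0}, b j with hsb
  set n : ℝ := (Fintype.card β : ℝ) with hn
  have hnpos : (0 : ℝ) < n := by
    rw [hn]; exact_mod_cast Fintype.card_pos
  set g : ((j : {j : α // j ≠ i0}) → Fin (b j) → β) → ℝ := fun w => (Nat.card {x : β // Qprop G T i0 b w ∧ Cprop G T i0 b w x} : ℝ)
    with hg
  have hg0 : ∀ w ∈ Finset.univ, 0 ≤ g w := fun w _ => Nat.cast_nonneg _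
  have hcardW : (Fintype.card ((j : {j : α // j ≠ i0}) → Fin (b j) → β) : ℝ) = n ^ sb := by
    rw [Fintype.card_pi]
    push_cast
    rw [hn, hsb]
    push_cast
    rw [← Finset.prod_pow_eq_pow_sum]
    exact Finset.prod_congr rfl fun j _ => by rw [Fintype.card_fun]; push_cast; simp
  have hdens : ∀ m' : ℕ, m' ≠ 0 → homDensity (blowup G (extFun i0 b m')) T
      = (∑ w : (j : {j : α // j ≠ i0}) → Fin (b j) → β, g w ^ m') / n ^ (m' + sb) := by
    intro m' hm'
    rw [homDensity, card_hom_blowup G T i0 b hm', card_vertices_ext i0 b m']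
    push_cast
    rfl
  rw [hdens 1 one_ne_zero, hdens (k + 1) (Nat.succ_ne_zero k)]
  have hjensen : (∑ w : (j : {j : α // j ≠ i0}) → Fin (b j) → β, g w ^ 1) ^ (k + 1) ≤ (n ^ sb) ^ k * ∑ w : (j : {j : α // j ≠ i0}) → Fin (b j) → β, g w ^ (k + 1) := by
    have := pow_sum_le_card_mul_sum_pow hg0 k
    rw [Finset.card_univ] at this
    rw [hcardW] at this
    simpa using this
  have hsum_nonneg : (0 : ℝ) ≤ ∑ w : (j : {j : α // j ≠ i0}) → Fin (b j) → β, g w ^ (k + 1) :=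
    Finset.sum_nonneg fun w _ => pow_nonneg (hg0 w (Finset.mem_univ w)) _
  calc ((∑ w : (j : {j : α // j ≠ i0}) → Fin (b j) → β, g w ^ 1) / n ^ (1 + sb)) ^ (k + 1)
      = (∑ w : (j : {j : α // j ≠ i0}) → Fin (b j) → β, g w ^ 1) ^ (k + 1) / n ^ ((1 + sb) * (k + 1)) := by
        rw [div_pow, ← pow_mul]
    _ ≤ ((n ^ sb) ^ k * ∑ w : (j : {j : α // j ≠ i0}) → Fin (b j) → β, g w ^ (k + 1)) / n ^ ((1 + sb) * (k + 1)) := by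
        gcongr
    _ = (∑ w : (j : {j : α // j ≠ i0}) → Fin (b j) → β, g w ^ (k + 1)) / n ^ (k + 1 + sb) := by
        have hexp : (1 + sb) * (k + 1) = sb * k + (k + 1 + sb) := by ring
        rw [hexp, pow_add, ← pow_mul]
        rw [mul_div_mul_left _ _ (by positivity : (n : ℝ) ^ (sb * k) ≠ 0)]

end Key

lemma sum_ext' {α : Type*} [Fintype α] [DecidableEq α] (i0 : α) (b : {j : α // j ≠ i0} → ℕ)
    (m : ℕ) : ∑ i : α, extFun i0 b m i = m + ∑ j : {j : α // j ≠ i0}, b j := by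
  rw [Fintype.sum_eq_add_sum_compl i0]
  congr 1
  · exact dif_pos rfl
  · rw [Finset.sum_subtype (p := fun j => j ≠ i0) {i0}ᶜ (fun x => by simp) (extFun i0 b m)]
    exact Finset.sum_congr rfl fun j _ => dif_neg j.2

theorem stmt_0 {α β : Type*} [Fintype α] [Fintype β] [Nonempty β]
    (G : SimpleGraph α) (a : α → ℕ) (ha : ∀ i, 0 < a i)
    (T : SimpleGraph β) :
    homDensity G T ^ (∏ i, a i) ≤ homDensity (blowup G a) T := by
  classical
  suffices H : ∀ N (a : α → ℕ), (∀ i, 0 < a i) → ∑ i, a i = N →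
      homDensity G T ^ (∏ i, a i) ≤ homDensity (blowup G a) T from H _ a ha rfl
  intro N
  induction N using Nat.strong_induction_on with
  | _ N ih =>
    intro a ha hsum
    by_cases hall : ∀ i, a i = 1
    · have h1 : ∏ i, a i = 1 := Finset.prod_eq_one fun i _ => hall i
      rw [h1, pow_one, homDensity_eq_of_iso T (blowupOneIso G a hall).symm]
    · push_neg at hall
      obtain ⟨i0, hi0⟩ := hall
      have hm : 2 ≤ a i0 := by have := ha i0; omega
      set b : {j : α // j ≠ i0} → ℕ := fun j => a j.1 with hb
      have hae : a = extFun i0 b (a i0) := by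
        funext i
        by_cases h : i = i0
        · subst h; simp [extFun]
        · simp [extFun, h, hb]
      rw [hae]
      have hpos1 : ∀ i, 0 < extFun i0 b 1 i := by
        intro i
        by_cases h : i = i0
        · subst h; simp [extFun]
        · simp [extFun, h]; exact ha i
      have hlt : ∑ i, extFun i0 b 1 i < N := by
        rw [hae] at hsum
        rw [sum_ext' i0 b 1]
        rw [sum_ext' i0 b (a i0)] at hsum
        omega
      have hIH := ih _ hlt (extFun i0 b 1) hpos1 rfl
      calc homDensity G T ^ (∏ i, extFun i0 b (a i0) i)
          = (homDensity G T ^ (∏ i, extFun i0 b 1 i)) ^ (a i0) := by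
            rw [← pow_mul]
            congr 1
            rw [prod_ext, prod_ext]
            ring
        _ ≤ homDensity (blowup G (extFun i0 b 1)) T ^ (a i0) :=
            pow_le_pow_left₀ (pow_nonneg (homDensity_nonneg G T) _) hIH _
        _ ≤ homDensity (blowup G (extFun i0 b (a i0))) T :=
            key G T i0 b (by omega)
end

section
/- Let G and H be finite simple graphs with at least one vertex each. There exists a real number c ≥ 0 such that t(G,T) ≥ t(H,T)^c for all finite simple graphs T with at least one vertex if and only if hom(G,H) > 0. Moreover, when hom(G,H) > 0, the smallest such c, denoted C(G,H), exists and satisfies C(G,H) ≤ (v(G)/v(H))^{v(H)} if v(H) ≤ v(G)/e, and C(G,H) ≤ e^{v(G)/e} if v(H) ≥ v(G)/e, where e = 2.7182… is Euler's number. -/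
open SimpleGraph Finset
open scoped Classical
set_option maxHeartbeats 1000000

/-- The set of real exponents `c ≥ 0` such that `t(G,T) ≥ t(H,T)^c` for all
finite graphs `T` with at least one vertex. -/
def domSet {α β : Type*} [Fintype α] [Fintype β]
    (G : SimpleGraph α) (H : SimpleGraph β) : Set ℝ :=
  {c : ℝ | 0 ≤ c ∧ ∀ (n : ℕ), 0 < n → ∀ T : SimpleGraph (Fin n),
    homDensity H T ^ c ≤ homDensity G T}

/-- The homomorphism density domination exponent `C(G,H)`, as the infimum of `domSet G H`. -/
noncomputable def domExp {α β : Type*} [Fintype α] [Fintype β]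
    (G : SimpleGraph α) (H : SimpleGraph β) : ℝ :=
  sInf (domSet G H)


noncomputable def ind (p : Prop) : ℝ := if p then 1 else 0

lemma ind_nonneg (p : Prop) : 0 ≤ ind p := by unfold ind; split <;> norm_num
lemma ind_le_one (p : Prop) : ind p ≤ 1 := by unfold ind; split <;> norm_num
lemma ind_of (p : Prop) (h : p) : ind p = 1 := if_pos h
lemma ind_of_not (p : Prop) (h : ¬ p) : ind p = 0 := if_neg h
lemma ind_mono {p q : Prop} (h : p → q) : ind p ≤ ind q := by
  unfold ind; split
  · rw [if_pos (h ‹p›)]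
  · split <;> norm_num
lemma ind_congr {p q : Prop} (h : p ↔ q) : ind p = ind q := by
  unfold ind; exact if_congr h rfl rfl
lemma ind_and (p q : Prop) : ind (p ∧ q) = ind p * ind q := by
  unfold ind; by_cases hp : p <;> by_cases hq : q <;> simp [hp, hq]
lemma ind_forall {γ : Type*} [Fintype γ] (p : γ → Prop) :
    ind (∀ x, p x) = ∏ x, ind (p x) := by
  by_cases h : ∀ x, p x
  · rw [ind_of _ h, eq_comm]
    exact Finset.prod_eq_one fun x _ => ind_of _ (h x)
  · rw [ind_of_not _ h, eq_comm]
    push_neg at h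
    obtain ⟨x, hx⟩ := h
    exact Finset.prod_eq_zero (mem_univ x) (ind_of_not _ hx)
lemma sum_ind {γ : Type*} [Fintype γ] (p : γ → Prop) :
    ∑ x, ind (p x) = (Nat.card {x // p x} : ℝ) := by
  rw [Nat.card_eq_fintype_card, Fintype.card_subtype]
  rw [← Finset.sum_boole]
  simp [ind]


lemma sum_fn_prod {ι κ : Type*} [DecidableEq ι] [Fintype ι] [Fintype κ] (g : κ → ℝ) :
    ∑ u : ι → κ, ∏ x : ι, g (u x) = (∑ y, g y) ^ (Fintype.card ι) := by
  classical
  rw [eq_comm]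
  calc (∑ y, g y) ^ (Fintype.card ι) = ∏ _x : ι, ∑ y, g y := by
        rw [Finset.prod_const, Finset.card_univ]
    _ = ∑ u : ι → κ, ∏ x : ι, g (u x) := Fintype.prod_sum (fun _ y => g y)

lemma sum_fn_eval {ι κ : Type*} [DecidableEq ι] [Fintype ι] [Fintype κ] (g : κ → ℝ) (pt : ι) :
    ∑ u : ι → κ, g (u pt) = (Fintype.card κ : ℝ) ^ (Fintype.card ι - 1) * ∑ y, g y := by
  classical
  rw [← Equiv.sum_comp (Equiv.funSplitAt pt κ).symm (fun u => g (u pt))]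
  have : ∀ q : κ × ({ j // j ≠ pt } → κ), ((Equiv.funSplitAt pt κ).symm q) pt = q.1 := by
    intro q; simp [Equiv.funSplitAt_symm_apply]
  calc ∑ q : κ × ({ j // j ≠ pt } → κ), g (((Equiv.funSplitAt pt κ).symm q) pt)
      = ∑ q : κ × ({ j // j ≠ pt } → κ), g q.1 := by
        exact Finset.sum_congr rfl fun q _ => by rw [this q]
    _ = ∑ y : κ, ∑ _w : { j // j ≠ pt } → κ, g y := Fintype.sum_prod_type _
    _ = _ := by
        simp only [Finset.sum_const, Finset.card_univ, nsmul_eq_mul]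
        rw [← Finset.mul_sum]
        congr 1
        rw [Fintype.card_fun, Nat.cast_pow]
        congr 2
        have h1 : Fintype.card { j // ¬ j = pt } = Fintype.card ι - Fintype.card { j // j = pt } :=
          Fintype.card_subtype_compl _
        rw [Fintype.card_subtype_eq] at h1
        exact h1

lemma ind_mul_pow (p : Prop) (t : ℝ) {k : ℕ} (hk : 1 ≤ k) : ind p * t ^ k = (ind p * t) ^ k := by
  unfold ind; split
  · simp
  · simp [zero_pow (by omega : k ≠ 0)]

section HomCount
variable {γ δ : Type*} [Fintype γ] [Fintype δ]

noncomputable instance homFinite (K : SimpleGraph γ) (T : SimpleGraph δ) : Finite (K →g T) :=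
  Finite.of_injective (fun f => (f : γ → δ)) DFunLike.coe_injective

/-- hom type is equiv to subtype of functions -/
noncomputable def homEquiv (K : SimpleGraph γ) (T : SimpleGraph δ) :
    (K →g T) ≃ {f : γ → δ // ∀ x y, K.Adj x y → T.Adj (f x) (f y)} where
  toFun f := ⟨f, fun _ _ h => f.map_rel h⟩
  invFun f := ⟨f.1, fun h => f.2 _ _ h⟩
  left_inv f := rfl
  right_inv f := rfl

lemma card_hom_eq_sum (K : SimpleGraph γ) (T : SimpleGraph δ) :
    (Nat.card (K →g T) : ℝ) = ∑ f : γ → δ, ind (∀ x y, K.Adj x y → T.Adj (f x) (f y)) := by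
  rw [sum_ind, Nat.card_congr (homEquiv K T)]

lemma card_hom_le (K : SimpleGraph γ) (T : SimpleGraph δ) :
    (Nat.card (K →g T) : ℝ) ≤ (Fintype.card δ : ℝ) ^ (Fintype.card γ) := by
  rw [card_hom_eq_sum]
  calc ∑ f : γ → δ, ind (∀ x y, K.Adj x y → T.Adj (f x) (f y))
      ≤ ∑ _f : γ → δ, (1:ℝ) := Finset.sum_le_sum fun f _ => ind_le_one _
    _ = (Fintype.card δ : ℝ) ^ (Fintype.card γ) := by
        simp [Fintype.card_fun]

lemma homDensity_nonneg_s1 (K : SimpleGraph γ) (T : SimpleGraph δ) : 0 ≤ homDensity K T := by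
  unfold homDensity; positivity

lemma homDensity_le_one (K : SimpleGraph γ) (T : SimpleGraph δ) (h : 0 < Fintype.card δ) :
    homDensity K T ≤ 1 := by
  unfold homDensity
  rw [div_le_one (by positivity)]
  exact card_hom_le K T

end HomCount

section IsoCopy
variable {γ δ ε : Type*} [Fintype γ] [Fintype δ] [Fintype ε]

/-- composition with an iso gives an equiv of hom types -/
noncomputable def homCompIso (K : SimpleGraph γ) {T : SimpleGraph δ} {T' : SimpleGraph ε}
    (e : T ≃g T') : (K →g T) ≃ (K →g T') where
  toFun f := e.toHom.comp f
  invFun f := e.symm.toHom.comp f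
  left_inv f := by ext x; simp
  right_inv f := by ext x; simp

/-- a copy of `H` on `Fin (card β)` -/
noncomputable def finCopy (H : SimpleGraph δ) : SimpleGraph (Fin (Fintype.card δ)) where
  Adj x y := H.Adj ((Fintype.equivFin δ).symm x) ((Fintype.equivFin δ).symm y)
  symm.symm x y h := H.adj_symm h
  loopless.irrefl x h := H.irrefl h

noncomputable def finCopyIso (H : SimpleGraph δ) : H ≃g finCopy H where
  toEquiv := Fintype.equivFin δ
  map_rel_iff' := by intro a b; simp [finCopy]

lemma card_hom_finCopy (K : SimpleGraph γ) (H : SimpleGraph δ) :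
    Nat.card (K →g finCopy H) = Nat.card (K →g H) :=
  (Nat.card_congr (homCompIso K (finCopyIso H))).symm

end IsoCopy

section Core
variable {α β : Type*} [Fintype α] [Fintype β] (H : SimpleGraph β) {n : ℕ}
  (T : SimpleGraph (Fin n)) (φ : α → β)

/-- partial hom condition: pairs inside `R` must map edges to edges -/
def cnd (R : Finset α) (f : α → Fin n) : Prop :=
  ∀ x ∈ R, ∀ y ∈ R, H.Adj (φ x) (φ y) → T.Adj (f x) (f y)

noncomputable def Msum (R : Finset α) : ℝ := ∑ f : α → Fin n, ind (cnd H T φ R f)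

lemma Msum_nonneg (R : Finset α) : 0 ≤ Msum H T φ R :=
  Finset.sum_nonneg fun _ _ => ind_nonneg _

lemma Msum_univ_le (G : SimpleGraph α) (hφ : ∀ x y, G.Adj x y → H.Adj (φ x) (φ y)) :
    Msum H T φ Finset.univ ≤ (Nat.card (G →g T) : ℝ) := by
  rw [card_hom_eq_sum]
  exact Finset.sum_le_sum fun f _ => ind_mono fun hc x y hxy =>
    hc x (mem_univ x) y (mem_univ y) (hφ x y hxy)

lemma Msum_split (R : Finset α) :
    Msum H T φ R = (∑ u : {x // x ∈ R} → Fin n,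
        ind (∀ x y : {x // x ∈ R}, H.Adj (φ x) (φ y) → T.Adj (u x) (u y))) *
      (n : ℝ) ^ (Fintype.card α - R.card) := by
  classical
  unfold Msum
  rw [← Equiv.sum_comp (Equiv.piEquivPiSubtypeProd (fun x => x ∈ R) (fun _ => Fin n)).symm
    (fun f => ind (cnd H T φ R f)), Fintype.sum_prod_type]
  have key : ∀ (u : {x // x ∈ R} → Fin n) (w : {x // ¬ x ∈ R} → Fin n),
      cnd H T φ R ((Equiv.piEquivPiSubtypeProd (fun x => x ∈ R) (fun _ => Fin n)).symm (u, w))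
      ↔ (∀ x y : {x // x ∈ R}, H.Adj (φ x) (φ y) → T.Adj (u x) (u y)) := by
    intro u w
    constructor
    · intro hc x y hxy
      have := hc x x.2 y y.2 hxy
      simpa [Equiv.piEquivPiSubtypeProd_symm_apply, dif_pos x.2, dif_pos y.2] using this
    · intro hc x hx y hy hxy
      have := hc ⟨x, hx⟩ ⟨y, hy⟩ hxy
      simpa [Equiv.piEquivPiSubtypeProd_symm_apply, dif_pos hx, dif_pos hy] using this
  calc ∑ u, ∑ w, ind (cnd H T φ R
        ((Equiv.piEquivPiSubtypeProd (fun x => x ∈ R) (fun _ => Fin n)).symm (u, w)))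
      = ∑ u : {x // x ∈ R} → Fin n, ∑ _w : {x // ¬ x ∈ R} → Fin n,
          ind (∀ x y : {x // x ∈ R}, H.Adj (φ x) (φ y) → T.Adj (u x) (u y)) := by
        apply Finset.sum_congr rfl; intro u _; apply Finset.sum_congr rfl; intro w _
        rw [ind, ind, if_congr (key u w) rfl rfl]
        congr 1
    _ = _ := by
        rw [Finset.sum_comm]
        rw [Finset.sum_const, Finset.card_univ, nsmul_eq_mul, mul_comm]
        congr 1
        rw [Fintype.card_fun, Fintype.card_fin]
        rw [Nat.cast_pow]
        congr 2
        rw [Fintype.card_subtype_compl, Fintype.card_coe]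

lemma density_le_Msum (hn : 0 < n) (σ : β → α)
    (hσ : ∀ j ∈ Finset.univ.image φ, φ (σ j) = j) :
    homDensity H T ≤
      Msum H T φ ((Finset.univ.image φ).image σ) / (n : ℝ) ^ (Fintype.card α) := by
  classical
  set S : Finset β := Finset.univ.image φ with hS
  set R₀ : Finset α := S.image σ with hR₀
  set C : ℕ := Nat.card {u : {x // x ∈ R₀} → Fin n //
    ∀ x y : {x // x ∈ R₀}, H.Adj (φ x) (φ y) → T.Adj (u x) (u y)} with hC
  have hnR : (0:ℝ) < (n:ℝ) := by exact_mod_cast hn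
  have hn1 : (1:ℝ) ≤ (n:ℝ) := by exact_mod_cast hn
  have hs₀₁ : R₀.card ≤ S.card := Finset.card_image_le
  have hs₁b : S.card ≤ Fintype.card β := by
    simpa using Finset.card_le_card (Finset.subset_univ S)
  have hs₀a : R₀.card ≤ Fintype.card α := by
    simpa using Finset.card_le_card (Finset.subset_univ R₀)
  -- injection step
  have hinj : (Nat.card (H →g T) : ℝ) ≤ (C:ℝ) * (n:ℝ) ^ (Fintype.card β - S.card) := by
    have : Nat.card (H →g T) ≤ C * n ^ (Fintype.card β - S.card) := by
      have := Nat.card_le_card_of_injective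
        (α := H →g T)
        (β := {u : {x // x ∈ R₀} → Fin n //
            ∀ x y : {x // x ∈ R₀}, H.Adj (φ x) (φ y) → T.Adj (u x) (u y)} ×
          ({j // j ∉ S} → Fin n))
        (fun ψ => (⟨fun x => ψ (φ x.1), fun x y h => ψ.map_rel h⟩, fun j => ψ j.1))
        ?_
      · calc Nat.card (H →g T) ≤ _ := this
          _ = C * n ^ (Fintype.card β - S.card) := by
            rw [Nat.card_prod, ← hC]
            congr 1
            rw [Nat.card_eq_fintype_card, Fintype.card_fun, Fintype.card_fin,
              Fintype.card_subtype_compl, Fintype.card_coe]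
      · intro ψ₁ ψ₂ hψ
        obtain ⟨h1, h2⟩ := Prod.ext_iff.mp hψ
        ext i
        by_cases hi : i ∈ S
        · have hσi : σ i ∈ R₀ := Finset.mem_image_of_mem σ hi
          have := congrFun (Subtype.ext_iff.mp h1) ⟨σ i, hσi⟩
          simp only at this
          rw [hσ i hi] at this
          exact congrArg _ this
        · exact congrArg Fin.val (congrFun h2 ⟨i, hi⟩)
    calc (Nat.card (H →g T) : ℝ) ≤ ((C * n ^ (Fintype.card β - S.card) : ℕ) : ℝ) := by
          exact_mod_cast this
      _ = (C:ℝ) * (n:ℝ) ^ (Fintype.card β - S.card) := by push_cast; ring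
  -- sum identity
  have hsplit : Msum H T φ R₀ = (C:ℝ) * (n:ℝ) ^ (Fintype.card α - R₀.card) := by
    rw [Msum_split, hC]
    congr 1
    rw [sum_ind]
  have h1 : homDensity H T ≤ (C:ℝ) / (n:ℝ) ^ S.card := by
    unfold homDensity
    rw [Fintype.card_fin, div_le_div_iff₀ (by positivity) (by positivity)]
    calc (Nat.card (H →g T) : ℝ) * (n:ℝ) ^ S.card
        ≤ ((C:ℝ) * (n:ℝ) ^ (Fintype.card β - S.card)) * (n:ℝ) ^ S.card := by
          apply mul_le_mul_of_nonneg_right hinj (by positivity)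
      _ = (C:ℝ) * (n:ℝ) ^ (Fintype.card β) := by
          rw [mul_assoc, ← pow_add, Nat.sub_add_cancel hs₁b]
  have h2 : (C:ℝ) / (n:ℝ) ^ S.card ≤ (C:ℝ) / (n:ℝ) ^ R₀.card := by
    apply div_le_div_of_nonneg_left (by positivity) (by positivity)
    exact pow_le_pow_right₀ hn1 hs₀₁
  have h3 : (C:ℝ) / (n:ℝ) ^ R₀.card = Msum H T φ R₀ / (n:ℝ) ^ (Fintype.card α) := by
    rw [hsplit, div_eq_div_iff (by positivity) (by positivity), mul_assoc, ← pow_add,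
      Nat.sub_add_cancel hs₀a]
  calc homDensity H T ≤ _ := h1
    _ ≤ _ := h2
    _ = _ := h3

lemma step_ineq (hn : 0 < n) (Rrest : Finset α) (j₀ : β)
    (hdisj : ∀ x ∈ Rrest, φ x ≠ j₀) (x₀ : α) (hx₀ : φ x₀ = j₀) :
    (Msum H T φ (insert x₀ Rrest) / (n:ℝ) ^ (Fintype.card α)) ^
        (Finset.univ.filter (fun x => φ x = j₀)).card
      ≤ Msum H T φ (Rrest ∪ Finset.univ.filter (fun x => φ x = j₀)) / (n:ℝ) ^ (Fintype.card α) := by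
  classical
  have hnR : (0:ℝ) < (n:ℝ) := by exact_mod_cast hn
  set k := (Finset.univ.filter (fun x => φ x = j₀)).card with hkdef
  have hx₀f : x₀ ∈ Finset.univ.filter (fun x => φ x = j₀) := by simp [hx₀]
  have hk1 : 1 ≤ k := Finset.card_pos.mpr ⟨x₀, hx₀f⟩
  obtain ⟨m, hm⟩ : ∃ m, k = m + 1 := ⟨k - 1, by omega⟩
  have hka : k ≤ Fintype.card α := by
    rw [hkdef, ← Finset.card_univ]
    exact Finset.card_le_card (Finset.subset_univ _)
  obtain ⟨r, hr⟩ : ∃ r, Fintype.card α = r + k := ⟨Fintype.card α - k, by omega⟩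
  have hcardF : Fintype.card {x : α // φ x = j₀} = k := Fintype.card_subtype _
  have hcardW : Fintype.card {x : α // ¬ φ x = j₀} = r := by
    have := Fintype.card_subtype_compl (p := fun x : α => φ x = j₀)
    rw [this, hcardF]
    omega
  set A : ({x : α // ¬ φ x = j₀} → Fin n) → ℝ := fun v =>
    ind (∀ x y : {x : α // ¬ φ x = j₀}, (↑x ∈ Rrest) → (↑y ∈ Rrest) →
      H.Adj (φ ↑x) (φ ↑y) → T.Adj (v x) (v y)) with hA
  set d : ({x : α // ¬ φ x = j₀} → Fin n) → Fin n → ℝ := fun v y =>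
    ind (∀ z : {x : α // ¬ φ x = j₀}, (↑z ∈ Rrest) → H.Adj (φ ↑z) j₀ → T.Adj (v z) y) with hd
  set B : ({x : α // ¬ φ x = j₀} → Fin n) → ℝ := fun v => ∑ y, d v y with hB
  set Φ := (Equiv.piEquivPiSubtypeProd (fun x : α => φ x = j₀) (fun _ => Fin n)).symm with hΦ
  have happ_pos : ∀ (u : {x : α // φ x = j₀} → Fin n) (v : {x : α // ¬ φ x = j₀} → Fin n)
      (x : α) (hx : φ x = j₀), Φ (u, v) x = u ⟨x, hx⟩ := by
    intro u v x hx
    simp [hΦ, Equiv.piEquivPiSubtypeProd_symm_apply, dif_pos hx]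
  have happ_neg : ∀ (u : {x : α // φ x = j₀} → Fin n) (v : {x : α // ¬ φ x = j₀} → Fin n)
      (x : α) (hx : ¬ φ x = j₀), Φ (u, v) x = v ⟨x, hx⟩ := by
    intro u v x hx
    simp [hΦ, Equiv.piEquivPiSubtypeProd_symm_apply, dif_neg hx]
  -- key pointwise identities
  have key1 : ∀ u v, cnd H T φ (insert x₀ Rrest) (Φ (u, v)) ↔
      ((∀ x y : {x : α // ¬ φ x = j₀}, (↑x ∈ Rrest) → (↑y ∈ Rrest) →
          H.Adj (φ ↑x) (φ ↑y) → T.Adj (v x) (v y)) ∧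
        (∀ z : {x : α // ¬ φ x = j₀}, (↑z ∈ Rrest) → H.Adj (φ ↑z) j₀ →
          T.Adj (v z) (u ⟨x₀, hx₀⟩))) := by
    intro u v
    constructor
    · intro hc
      constructor
      · intro x y hx hy hxy
        have := hc ↑x (Finset.mem_insert_of_mem hx) ↑y (Finset.mem_insert_of_mem hy) hxy
        rwa [happ_neg u v x x.2, happ_neg u v y y.2] at this
      · intro z hz hadj
        have := hc ↑z (Finset.mem_insert_of_mem hz) x₀ (Finset.mem_insert_self x₀ Rrest)
          (by rwa [hx₀])
        rwa [happ_neg u v z z.2, happ_pos u v x₀ hx₀] at this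
    · rintro ⟨hAc, hdc⟩ x hx y hy hxy
      rcases Finset.mem_insert.mp hx with rfl | hx' <;>
        rcases Finset.mem_insert.mp hy with rfl | hy'
      · rw [hx₀] at hxy; exact absurd hxy (H.irrefl)
      · have hyW : ¬ φ y = j₀ := hdisj y hy'
        rw [happ_pos u v x hx₀, happ_neg u v y hyW]
        exact T.adj_symm (hdc ⟨y, hyW⟩ hy' (H.adj_symm (by rwa [hx₀] at hxy)))
      · have hxW : ¬ φ x = j₀ := hdisj x hx'
        rw [happ_neg u v x hxW, happ_pos u v y hx₀]
        exact hdc ⟨x, hxW⟩ hx' (by rwa [hx₀] at hxy)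
      · have hxW : ¬ φ x = j₀ := hdisj x hx'
        have hyW : ¬ φ y = j₀ := hdisj y hy'
        rw [happ_neg u v x hxW, happ_neg u v y hyW]
        exact hAc ⟨x, hxW⟩ ⟨y, hyW⟩ hx' hy' hxy
  have key2 : ∀ u v, cnd H T φ (Rrest ∪ Finset.univ.filter (fun x => φ x = j₀)) (Φ (u, v)) ↔
      ((∀ x y : {x : α // ¬ φ x = j₀}, (↑x ∈ Rrest) → (↑y ∈ Rrest) →
          H.Adj (φ ↑x) (φ ↑y) → T.Adj (v x) (v y)) ∧
        (∀ w : {x : α // φ x = j₀},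
          ∀ z : {x : α // ¬ φ x = j₀}, (↑z ∈ Rrest) → H.Adj (φ ↑z) j₀ →
            T.Adj (v z) (u w))) := by
    intro u v
    have hmemfib : ∀ w : {x : α // φ x = j₀},
        (↑w : α) ∈ Rrest ∪ Finset.univ.filter (fun x => φ x = j₀) := by
      intro w
      exact Finset.mem_union_right _ (by simpa using w.2)
    constructor
    · intro hc
      constructor
      · intro x y hx hy hxy
        have := hc ↑x (Finset.mem_union_left _ hx) ↑y (Finset.mem_union_left _ hy) hxy
        rwa [happ_neg u v x x.2, happ_neg u v y y.2] at this
      · intro w z hz hadj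
        have := hc ↑z (Finset.mem_union_left _ hz) ↑w (hmemfib w) (by rwa [w.2])
        rwa [happ_neg u v z z.2, happ_pos u v ↑w w.2] at this
    · rintro ⟨hAc, hdc⟩ x hx y hy hxy
      have hx' : x ∈ Rrest ∨ φ x = j₀ := by
        rcases Finset.mem_union.mp hx with h | h
        · exact Or.inl h
        · exact Or.inr (by simpa using h)
      have hy' : y ∈ Rrest ∨ φ y = j₀ := by
        rcases Finset.mem_union.mp hy with h | h
        · exact Or.inl h
        · exact Or.inr (by simpa using h)
      rcases hx' with hx' | hx' <;> rcases hy' with hy' | hy'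
      · have hxW : ¬ φ x = j₀ := hdisj x hx'
        have hyW : ¬ φ y = j₀ := hdisj y hy'
        rw [happ_neg u v x hxW, happ_neg u v y hyW]
        exact hAc ⟨x, hxW⟩ ⟨y, hyW⟩ hx' hy' hxy
      · have hxW : ¬ φ x = j₀ := hdisj x hx'
        rw [happ_neg u v x hxW, happ_pos u v y hy']
        exact hdc ⟨y, hy'⟩ ⟨x, hxW⟩ hx' (by rwa [hy'] at hxy)
      · have hyW : ¬ φ y = j₀ := hdisj y hy'
        rw [happ_pos u v x hx', happ_neg u v y hyW]
        exact T.adj_symm (hdc ⟨x, hx'⟩ ⟨y, hyW⟩ hy' (H.adj_symm (by rwa [hx'] at hxy)))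
      · rw [hx'] at hxy
        rw [hy'] at hxy
        exact absurd hxy (H.irrefl)
  -- sum computations
  have hM2 : Msum H T φ (Rrest ∪ Finset.univ.filter (fun x => φ x = j₀))
      = ∑ v : {x : α // ¬ φ x = j₀} → Fin n, A v * B v ^ k := by
    unfold Msum
    rw [← Equiv.sum_comp Φ (fun f => ind (cnd H T φ _ f)), Fintype.sum_prod_type]
    calc ∑ u : {x : α // φ x = j₀} → Fin n, ∑ v : {x : α // ¬ φ x = j₀} → Fin n,
          ind (cnd H T φ (Rrest ∪ Finset.univ.filter (fun x => φ x = j₀)) (Φ (u, v)))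
        = ∑ u : {x : α // φ x = j₀} → Fin n, ∑ v : {x : α // ¬ φ x = j₀} → Fin n,
            A v * ∏ w : {x : α // φ x = j₀}, d v (u w) := by
          apply Finset.sum_congr rfl; intro u _
          apply Finset.sum_congr rfl; intro v _
          simp only [hA, hd]
          rw [ind_congr (key2 u v), ind_and]
          congr 1
          rw [ind_forall]
      _ = ∑ v, A v * ∑ u : {x : α // φ x = j₀} → Fin n, ∏ w, d v (u w) := by
          rw [Finset.sum_comm]
          apply Finset.sum_congr rfl; intro v _
          rw [← Finset.mul_sum]
      _ = _ := by
          apply Finset.sum_congr rfl; intro v _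
          have hs := sum_fn_prod (ι := {x : α // φ x = j₀}) (κ := Fin n) (d v)
          rw [hcardF] at hs
          calc A v * ∑ u : {x : α // φ x = j₀} → Fin n, ∏ w : {x : α // φ x = j₀}, d v (u w)
              = A v * (∑ y, d v y) ^ k := congrArg _ hs
            _ = A v * B v ^ k := by simp only [hB]
  have hM1 : Msum H T φ (insert x₀ Rrest)
      = (n:ℝ) ^ m * ∑ v : {x : α // ¬ φ x = j₀} → Fin n, A v * B v := by
    unfold Msum
    rw [← Equiv.sum_comp Φ (fun f => ind (cnd H T φ _ f)), Fintype.sum_prod_type]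
    calc ∑ u : {x : α // φ x = j₀} → Fin n, ∑ v : {x : α // ¬ φ x = j₀} → Fin n,
          ind (cnd H T φ (insert x₀ Rrest) (Φ (u, v)))
        = ∑ u : {x : α // φ x = j₀} → Fin n, ∑ v : {x : α // ¬ φ x = j₀} → Fin n,
            A v * d v (u ⟨x₀, hx₀⟩) := by
          apply Finset.sum_congr rfl; intro u _
          apply Finset.sum_congr rfl; intro v _
          simp only [hA, hd]
          rw [ind_congr (key1 u v), ind_and]
      _ = ∑ v, A v * ∑ u : {x : α // φ x = j₀} → Fin n, d v (u ⟨x₀, hx₀⟩) := by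
          rw [Finset.sum_comm]
          apply Finset.sum_congr rfl; intro v _
          rw [← Finset.mul_sum]
      _ = _ := by
          rw [Finset.mul_sum]
          apply Finset.sum_congr rfl; intro v _
          have he := sum_fn_eval (ι := {x : α // φ x = j₀}) (d v) (⟨x₀, hx₀⟩ : {x : α // φ x = j₀})
          rw [Fintype.card_fin, hcardF] at he
          have hkm : k - 1 = m := by omega
          rw [hkm] at he
          calc A v * ∑ u : {x : α // φ x = j₀} → Fin n, d v (u ⟨x₀, hx₀⟩)
              = A v * ((n:ℝ) ^ m * ∑ y, d v y) := congrArg _ he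
            _ = (n:ℝ) ^ m * (A v * B v) := by simp only [hB]; ring
  -- Jensen
  set X := ∑ v : {x : α // ¬ φ x = j₀} → Fin n, A v * B v with hX
  have hABnn : ∀ v, 0 ≤ A v * B v := by
    intro v
    apply mul_nonneg (ind_nonneg _)
    exact Finset.sum_nonneg fun y _ => ind_nonneg _
  have hcardfun : ((Finset.univ : Finset ({x : α // ¬ φ x = j₀} → Fin n)).card : ℝ)
      = (n:ℝ) ^ r := by
    rw [Finset.card_univ, Fintype.card_fun, Fintype.card_fin, hcardW, Nat.cast_pow]
  have hJ : X ^ k / ((n:ℝ) ^ r) ^ m ≤ ∑ v, (A v * B v) ^ k := by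
    rw [hm, hX, ← hcardfun]
    exact pow_sum_div_card_le_sum_pow (fun v _ => hABnn v) m
  have hsum_eq : ∑ v, (A v * B v) ^ k = ∑ v, A v * B v ^ k := by
    apply Finset.sum_congr rfl; intro v _
    rw [ind_mul_pow _ _ hk1]
  have hXM : X ^ k ≤ Msum H T φ (Rrest ∪ Finset.univ.filter (fun x => φ x = j₀))
      * (n:ℝ) ^ (r * m) := by
    rw [hM2, ← hsum_eq]
    rw [div_le_iff₀ (by positivity), ← pow_mul] at hJ
    exact hJ
  have hXnn : 0 ≤ X := Finset.sum_nonneg fun v _ => hABnn v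
  -- final arithmetic
  rw [hM1, div_pow, div_le_div_iff₀ (by positivity) (by positivity)]
  calc ((n:ℝ) ^ m * X) ^ k * (n:ℝ) ^ (Fintype.card α)
      = X ^ k * (n:ℝ) ^ (m * k + Fintype.card α) := by
        rw [mul_pow, ← pow_mul, pow_add]; ring
    _ ≤ (Msum H T φ (Rrest ∪ Finset.univ.filter (fun x => φ x = j₀)) * (n:ℝ) ^ (r * m))
          * (n:ℝ) ^ (m * k + Fintype.card α) := by
        apply mul_le_mul_of_nonneg_right hXM (by positivity)
    _ = Msum H T φ (Rrest ∪ Finset.univ.filter (fun x => φ x = j₀))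
          * (n:ℝ) ^ (r * m + (m * k + Fintype.card α)) := by
        rw [pow_add]; ring
    _ = _ := by
        rw [← pow_mul]
        congr 2
        rw [hr, hm]
        ring

lemma chain_ineq (hn : 0 < n) (σ : β → α)
    (hσ : ∀ j ∈ Finset.univ.image φ, φ (σ j) = j) :
    ∀ D ⊆ Finset.univ.image φ,
      (Msum H T φ ((Finset.univ.image φ).image σ) / (n:ℝ) ^ (Fintype.card α)) ^
          (∏ j ∈ D, (Finset.univ.filter (fun x => φ x = j)).card)
        ≤ Msum H T φ ((Finset.univ.filter (fun x => φ x ∈ D))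
              ∪ ((Finset.univ.image φ) \ D).image σ)
            / (n:ℝ) ^ (Fintype.card α) := by
  classical
  intro D
  induction D using Finset.induction_on with
  | empty =>
    intro _
    simp
  | @insert j₀ D hj₀D IH =>
    intro hsub
    have hj₀S : j₀ ∈ Finset.univ.image φ := hsub (Finset.mem_insert_self _ _)
    have hDS : D ⊆ Finset.univ.image φ :=
      fun j hj => hsub (Finset.mem_insert_of_mem hj)
    set S := Finset.univ.image φ with hSdef
    set Rrest := (Finset.univ.filter (fun x => φ x ∈ D)) ∪ ((S \ insert j₀ D).image σ)
      with hRrest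
    have hsd : S \ D = insert j₀ (S \ insert j₀ D) := by
      ext j
      by_cases hj : j = j₀
      · subst hj
        simp [hj₀S, hj₀D]
      · simp [hj, Finset.mem_sdiff, Finset.mem_insert]
        try tauto
    have hRD : (Finset.univ.filter (fun x => φ x ∈ D)) ∪ (S \ D).image σ
        = insert (σ j₀) Rrest := by
      rw [hsd, Finset.image_insert, Finset.union_insert, hRrest]
    have hRD' : (Finset.univ.filter (fun x => φ x ∈ insert j₀ D))
          ∪ ((S \ insert j₀ D).image σ)
        = Rrest ∪ Finset.univ.filter (fun x => φ x = j₀) := by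
      ext x
      simp only [hRrest, Finset.mem_union, Finset.mem_filter, Finset.mem_univ, true_and,
        Finset.mem_insert]
      tauto
    have hdisj : ∀ x ∈ Rrest, φ x ≠ j₀ := by
      intro x hx
      rcases Finset.mem_union.mp hx with hx | hx
      · have : φ x ∈ D := (Finset.mem_filter.mp hx).2
        exact fun h => hj₀D (h ▸ this)
      · obtain ⟨i, hi, rfl⟩ := Finset.mem_image.mp hx
        have hi' := Finset.mem_sdiff.mp hi
        rw [hσ i hi'.1]
        exact fun h => hi'.2 (h ▸ Finset.mem_insert_self _ _)
    have hIH := IH hDS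
    calc (Msum H T φ (S.image σ) / (n:ℝ) ^ (Fintype.card α)) ^
          (∏ j ∈ insert j₀ D, (Finset.univ.filter (fun x => φ x = j)).card)
        = ((Msum H T φ (S.image σ) / (n:ℝ) ^ (Fintype.card α)) ^
            (∏ j ∈ D, (Finset.univ.filter (fun x => φ x = j)).card)) ^
            (Finset.univ.filter (fun x => φ x = j₀)).card := by
          rw [Finset.prod_insert hj₀D, ← pow_mul, mul_comm]
      _ ≤ (Msum H T φ ((Finset.univ.filter (fun x => φ x ∈ D)) ∪ (S \ D).image σ)
            / (n:ℝ) ^ (Fintype.card α)) ^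
            (Finset.univ.filter (fun x => φ x = j₀)).card := by
          exact pow_le_pow_left₀ (pow_nonneg (div_nonneg (Msum_nonneg H T φ _) (by positivity)) _) hIH _
      _ = (Msum H T φ (insert (σ j₀) Rrest) / (n:ℝ) ^ (Fintype.card α)) ^
            (Finset.univ.filter (fun x => φ x = j₀)).card := by rw [hRD]
      _ ≤ Msum H T φ (Rrest ∪ Finset.univ.filter (fun x => φ x = j₀))
            / (n:ℝ) ^ (Fintype.card α) :=
          step_ineq H T φ hn Rrest j₀ hdisj (σ j₀) (hσ j₀ hj₀S)
      _ = _ := by rw [← hRD']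

end Core


lemma self_le_exp_div_e {t : ℝ} (ht : 0 ≤ t) : t ≤ Real.exp (t / Real.exp 1) := by
  have he : (0:ℝ) < Real.exp 1 := Real.exp_pos 1
  have h := Real.add_one_le_exp (t / Real.exp 1 - 1)
  have h2 : t / Real.exp 1 ≤ Real.exp (t / Real.exp 1 - 1) := by linarith
  calc t = Real.exp 1 * (t / Real.exp 1) := by field_simp
    _ ≤ Real.exp 1 * Real.exp (t / Real.exp 1 - 1) := by
        apply mul_le_mul_of_nonneg_left h2 he.le
    _ = Real.exp (t / Real.exp 1) := by
        rw [← Real.exp_add]; ring_nf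

lemma pow_div_mono {a b s : ℕ} (hs : 1 ≤ s) (hsb : s ≤ b)
    (he : Real.exp 1 * (b:ℝ) ≤ (a:ℝ)) :
    ((a:ℝ)/(s:ℝ)) ^ s ≤ ((a:ℝ)/(b:ℝ)) ^ b := by
  have hsp : (0:ℝ) < (s:ℝ) := by exact_mod_cast hs
  have hbp : (0:ℝ) < (b:ℝ) := by exact_mod_cast lt_of_lt_of_le hs hsb
  have hap : (0:ℝ) < (a:ℝ) := lt_of_lt_of_le (by positivity) he
  have hab : Real.exp 1 ≤ (a:ℝ)/(b:ℝ) := by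
    rw [le_div_iff₀ hbp]; exact he
  have habp : (0:ℝ) < (a:ℝ)/(b:ℝ) := lt_of_lt_of_le (Real.exp_pos 1) hab
  have hlog : (1:ℝ) ≤ Real.log ((a:ℝ)/(b:ℝ)) := by
    rw [Real.le_log_iff_exp_le habp]; simpa using hab
  -- work in rpow
  have key : ((a:ℝ)/(s:ℝ)) ^ ((s:ℕ):ℝ) ≤ ((a:ℝ)/(b:ℝ)) ^ ((b:ℕ):ℝ) := by
    have hsplit : ((a:ℝ)/(s:ℝ)) ^ ((s:ℕ):ℝ) =
        ((a:ℝ)/(b:ℝ)) ^ ((s:ℕ):ℝ) * ((b:ℝ)/(s:ℝ)) ^ ((s:ℕ):ℝ) := by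
      rw [← Real.mul_rpow (by positivity) (by positivity)]
      congr 1
      field_simp
    rw [hsplit]
    have h1 : ((b:ℝ)/(s:ℝ)) ^ ((s:ℕ):ℝ) ≤ Real.exp ((b:ℝ) - (s:ℝ)) := by
      rw [Real.rpow_def_of_pos (by positivity)]
      apply Real.exp_le_exp.mpr
      have hls : Real.log ((b:ℝ)/(s:ℝ)) ≤ (b:ℝ)/(s:ℝ) - 1 :=
        Real.log_le_sub_one_of_pos (by positivity)
      calc Real.log ((b:ℝ)/(s:ℝ)) * (s:ℝ) ≤ ((b:ℝ)/(s:ℝ) - 1) * (s:ℝ) := by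
            apply mul_le_mul_of_nonneg_right hls hsp.le
        _ = (b:ℝ) - (s:ℝ) := by field_simp
    have h2 : Real.exp ((b:ℝ) - (s:ℝ)) ≤ ((a:ℝ)/(b:ℝ)) ^ (((b:ℝ) - (s:ℝ))) := by
      rw [Real.rpow_def_of_pos habp]
      apply Real.exp_le_exp.mpr
      have hbs : (0:ℝ) ≤ (b:ℝ) - (s:ℝ) := by
        have : (s:ℝ) ≤ (b:ℝ) := by exact_mod_cast hsb
        linarith
      calc (b:ℝ) - (s:ℝ) = ((b:ℝ) - (s:ℝ)) * 1 := by ring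
        _ ≤ ((b:ℝ) - (s:ℝ)) * Real.log ((a:ℝ)/(b:ℝ)) := by
            apply mul_le_mul_of_nonneg_left hlog hbs
        _ = Real.log ((a:ℝ)/(b:ℝ)) * ((b:ℝ) - (s:ℝ)) := by ring
    calc ((a:ℝ)/(b:ℝ)) ^ ((s:ℕ):ℝ) * ((b:ℝ)/(s:ℝ)) ^ ((s:ℕ):ℝ)
        ≤ ((a:ℝ)/(b:ℝ)) ^ ((s:ℕ):ℝ) * (((a:ℝ)/(b:ℝ)) ^ ((b:ℝ) - (s:ℝ))) := by
          apply mul_le_mul_of_nonneg_left (le_trans h1 h2) (by positivity)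
      _ = ((a:ℝ)/(b:ℝ)) ^ ((b:ℕ):ℝ) := by
          rw [← Real.rpow_add habp]
          congr 1
          ring
  rw [← Real.rpow_natCast ((a:ℝ)/(s:ℝ)) s, ← Real.rpow_natCast ((a:ℝ)/(b:ℝ)) b]
  exact key

section Fibers
variable {α β : Type*} [Fintype α] [Fintype β] [Nonempty α] (φ : α → β)

lemma sum_fibers :
    ∑ j ∈ Finset.univ.image φ, (Finset.univ.filter fun x => φ x = j).card
      = Fintype.card α := by
  rw [← Finset.card_univ (α := α)]
  exact (Finset.card_eq_sum_card_fiberwise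
    (fun x _ => Finset.mem_image_of_mem φ (Finset.mem_univ x))).symm

lemma P_le_exp :
    ((∏ j ∈ Finset.univ.image φ, (Finset.univ.filter fun x => φ x = j).card : ℕ) : ℝ)
      ≤ Real.exp ((Fintype.card α : ℝ) / Real.exp 1) := by
  push_cast
  calc ∏ j ∈ Finset.univ.image φ, ((Finset.univ.filter fun x => φ x = j).card : ℝ)
      ≤ ∏ j ∈ Finset.univ.image φ,
          Real.exp (((Finset.univ.filter fun x => φ x = j).card : ℝ) / Real.exp 1) := by
        apply Finset.prod_le_prod (fun j _ => by positivity)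
        exact fun j _ => self_le_exp_div_e (by positivity)
    _ = Real.exp (∑ j ∈ Finset.univ.image φ,
          ((Finset.univ.filter fun x => φ x = j).card : ℝ) / Real.exp 1) := by
        rw [Real.exp_sum]
    _ = Real.exp ((Fintype.card α : ℝ) / Real.exp 1) := by
        congr 1
        rw [← Finset.sum_div]
        congr 1
        rw [← sum_fibers φ]
        push_cast
        rfl

lemma P_le_pow (hbe : Real.exp 1 * (Fintype.card β : ℝ) ≤ (Fintype.card α : ℝ)) :
    ((∏ j ∈ Finset.univ.image φ, (Finset.univ.filter fun x => φ x = j).card : ℕ) : ℝ)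
      ≤ ((Fintype.card α : ℝ) / (Fintype.card β : ℝ)) ^ (Fintype.card β) := by
  classical
  set S := Finset.univ.image φ with hS
  set s := S.card with hs
  have hSne : S.Nonempty := (Finset.univ_nonempty).image φ
  have hs1 : 1 ≤ s := Finset.card_pos.mpr hSne
  have hsb : s ≤ Fintype.card β := by
    rw [hs, ← Finset.card_univ (α := β)]
    exact Finset.card_le_card (Finset.subset_univ S)
  have hsR : (0:ℝ) < (s:ℝ) := by exact_mod_cast hs1
  set z : β → ℝ := fun j => ((Finset.univ.filter fun x => φ x = j).card : ℝ) with hz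
  have hzn : ∀ j ∈ S, (0:ℝ) ≤ z j := fun j _ => by positivity
  have geo := Real.geom_mean_le_arith_mean_weighted S (fun _ => (s:ℝ)⁻¹) z
    (fun j _ => by positivity)
    (by rw [Finset.sum_const, nsmul_eq_mul, ← hs, mul_inv_cancel₀ (ne_of_gt hsR)])
    hzn
  have hsumz : ∑ j ∈ S, z j = (Fintype.card α : ℝ) := by
    rw [hz, ← sum_fibers φ, ← hS]
    push_cast
    rfl
  have hrhs : ∑ j ∈ S, (s:ℝ)⁻¹ * z j = (Fintype.card α : ℝ) / (s:ℝ) := by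
    rw [← Finset.mul_sum, hsumz]
    field_simp
  have hprod : (∏ j ∈ S, z j ^ ((s:ℝ)⁻¹)) ^ s = ∏ j ∈ S, z j := by
    rw [← Finset.prod_pow]
    apply Finset.prod_congr rfl
    intro j hj
    rw [← Real.rpow_natCast (z j ^ ((s:ℝ)⁻¹)) s, ← Real.rpow_mul (hzn j hj),
      inv_mul_cancel₀ (ne_of_gt hsR), Real.rpow_one]
  have hP1 : ∏ j ∈ S, z j ≤ ((Fintype.card α : ℝ) / (s:ℝ)) ^ s := by
    rw [← hprod]
    apply pow_le_pow_left₀ (Finset.prod_nonneg fun j hj => Real.rpow_nonneg (hzn j hj) _)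
    rw [← hrhs]
    exact geo
  push_cast
  calc ∏ j ∈ S, z j ≤ ((Fintype.card α : ℝ) / (s:ℝ)) ^ s := hP1
    _ ≤ _ := pow_div_mono hs1 hsb hbe

end Fibers

section Membership
variable {α β : Type*} [Fintype α] [Fintype β] [Nonempty α] [Nonempty β]

lemma key_membership (G : SimpleGraph α) (H : SimpleGraph β) (ψ : G →g H) :
    ∃ P : ℕ, 1 ≤ P ∧
      ((P:ℝ) ≤ Real.exp ((Fintype.card α : ℝ) / Real.exp 1)) ∧
      ((Real.exp 1 * (Fintype.card β : ℝ) ≤ (Fintype.card α : ℝ)) →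
        (P:ℝ) ≤ ((Fintype.card α : ℝ) / (Fintype.card β : ℝ)) ^ (Fintype.card β)) ∧
      (∀ n, 0 < n → ∀ T : SimpleGraph (Fin n), homDensity H T ^ (P:ℕ) ≤ homDensity G T) := by
  classical
  set φ : α → β := fun x => ψ x with hφ
  set S := Finset.univ.image φ with hSdef
  set P : ℕ := ∏ j ∈ S, (Finset.univ.filter fun x => φ x = j).card with hPdef
  have hP1 : 1 ≤ P := by
    apply Finset.one_le_prod'
    intro j hj
    obtain ⟨x, _, hx⟩ := Finset.mem_image.mp hj
    exact Finset.card_pos.mpr ⟨x, by simp [hx]⟩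
  refine ⟨P, hP1, P_le_exp φ, fun hbe => P_le_pow φ hbe, ?_⟩
  intro n hn T
  -- section map
  set σ : β → α := fun j => if h : ∃ x, φ x = j then h.choose else Classical.arbitrary α
    with hσdef
  have hσ : ∀ j ∈ Finset.univ.image φ, φ (σ j) = j := by
    intro j hj
    obtain ⟨x, _, hx⟩ := Finset.mem_image.mp hj
    have hex : ∃ x, φ x = j := ⟨x, hx⟩
    simp only [hσdef, dif_pos hex]
    exact hex.choose_spec
  have hchain := chain_ineq H T φ hn σ hσ S (le_refl _)
  have hfinal : (Finset.univ.filter (fun x => φ x ∈ S)) ∪ ((S \ S).image σ)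
      = (Finset.univ : Finset α) := by
    rw [Finset.sdiff_self, Finset.image_empty, Finset.union_empty]
    rw [Finset.filter_true_of_mem]
    intro x _
    exact Finset.mem_image_of_mem φ (Finset.mem_univ x)
  rw [hfinal] at hchain
  have h1 : homDensity H T ≤ Msum H T φ (S.image σ) / (n:ℝ) ^ (Fintype.card α) :=
    density_le_Msum H T φ hn σ hσ
  have h2 : Msum H T φ Finset.univ / (n:ℝ) ^ (Fintype.card α) ≤ homDensity G T := by
    unfold homDensity
    rw [Fintype.card_fin]
    apply div_le_div_of_nonneg_right ?_ (by positivity)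
    exact Msum_univ_le H T φ G (fun x y hxy => ψ.map_rel hxy)
  calc homDensity H T ^ P
      ≤ (Msum H T φ (S.image σ) / (n:ℝ) ^ (Fintype.card α)) ^ P :=
        pow_le_pow_left₀ (homDensity_nonneg_s1 H T) h1 P
    _ ≤ Msum H T φ Finset.univ / (n:ℝ) ^ (Fintype.card α) := hchain
    _ ≤ homDensity G T := h2

end Membership

section Final
variable {γ δ : Type*} [Fintype γ] [Fintype δ]

lemma card_hom_of_edgeless (G : SimpleGraph γ) (hG : ∀ x y, ¬ G.Adj x y)
    (T : SimpleGraph δ) :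
    (Nat.card (G →g T) : ℝ) = (Fintype.card δ : ℝ) ^ (Fintype.card γ) := by
  rw [card_hom_eq_sum]
  calc ∑ f : γ → δ, ind (∀ x y, G.Adj x y → T.Adj (f x) (f y))
      = ∑ _f : γ → δ, (1:ℝ) := by
        apply Finset.sum_congr rfl
        intro f _
        exact ind_of _ (fun x y hxy => absurd hxy (hG x y))
    _ = _ := by simp [Fintype.card_fun]

lemma card_hom_lt_of_edge (K : SimpleGraph γ) {x y : γ} (hxy : K.Adj x y)
    (T : SimpleGraph δ) [Nonempty δ] :
    (Nat.card (K →g T) : ℝ) < (Fintype.card δ : ℝ) ^ (Fintype.card γ) := by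
  classical
  obtain ⟨t₀⟩ := ‹Nonempty δ›
  rw [card_hom_eq_sum]
  calc ∑ f : γ → δ, ind (∀ x y, K.Adj x y → T.Adj (f x) (f y))
      < ∑ _f : γ → δ, (1:ℝ) := by
        apply Finset.sum_lt_sum (fun f _ => ind_le_one _)
        refine ⟨fun _ => t₀, Finset.mem_univ _, ?_⟩
        rw [ind_of_not]
        · norm_num
        · intro hc
          exact absurd (hc x y hxy) (T.irrefl)
    _ = _ := by simp [Fintype.card_fun]

lemma homDensity_finCopy (K : SimpleGraph γ) (H : SimpleGraph δ) :
    homDensity K (finCopy H)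
      = (Nat.card (K →g H) : ℝ) / (Fintype.card δ : ℝ) ^ (Fintype.card γ) := by
  unfold homDensity
  rw [card_hom_finCopy, Fintype.card_fin]

end Final

theorem stmt_1 {α β : Type*} [Fintype α] [Fintype β] [Nonempty α] [Nonempty β]
    (G : SimpleGraph α) (H : SimpleGraph β) :
    ((domSet G H).Nonempty ↔ 0 < Nat.card (G →g H)) ∧
    (0 < Nat.card (G →g H) →
      IsLeast (domSet G H) (domExp G H) ∧
      ((Fintype.card β : ℝ) ≤ (Fintype.card α : ℝ) / Real.exp 1 →
        domExp G H ≤ ((Fintype.card α : ℝ) / (Fintype.card β : ℝ)) ^ (Fintype.card β)) ∧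
      ((Fintype.card α : ℝ) / Real.exp 1 ≤ (Fintype.card β : ℝ) →
        domExp G H ≤ Real.exp ((Fintype.card α : ℝ) / Real.exp 1))) := by
  classical
  have hb : 0 < Fintype.card β := Fintype.card_pos
  have hbR : (0:ℝ) < (Fintype.card β : ℝ) := by exact_mod_cast hb
  -- membership of the explicit exponent
  have hPmem : 0 < Nat.card (G →g H) → ∃ P : ℕ, ((P:ℝ) ∈ domSet G H) ∧
      ((P:ℝ) ≤ Real.exp ((Fintype.card α : ℝ) / Real.exp 1)) ∧
      ((Real.exp 1 * (Fintype.card β : ℝ) ≤ (Fintype.card α : ℝ)) →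
        (P:ℝ) ≤ ((Fintype.card α : ℝ) / (Fintype.card β : ℝ)) ^ (Fintype.card β)) := by
    intro hGH
    obtain ⟨⟨ψ⟩, -⟩ := Nat.card_pos_iff.mp hGH
    obtain ⟨P, hP1, hPe, hPb, hPdom⟩ := key_membership G H ψ
    refine ⟨P, ⟨by positivity, ?_⟩, hPe, hPb⟩
    intro n hn T
    rw [Real.rpow_natCast]
    exact hPdom n hn T
  constructor
  · -- iff
    constructor
    · rintro ⟨c, hc0, hc⟩
      haveI : Nonempty (H →g H) := ⟨SimpleGraph.Hom.id⟩
      have hHH : 0 < Nat.card (H →g H) := Nat.card_pos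
      have hh₀ : 0 < homDensity H (finCopy H) := by
        rw [homDensity_finCopy]
        positivity
      have := hc (Fintype.card β) hb (finCopy H)
      have hg₀ : 0 < homDensity G (finCopy H) :=
        lt_of_lt_of_le (Real.rpow_pos_of_pos hh₀ c) this
      rw [homDensity_finCopy] at hg₀
      have : 0 < (Nat.card (G →g H) : ℝ) := by
        by_contra hle
        push_neg at hle
        have : (Nat.card (G →g H) : ℝ) = 0 := le_antisymm hle (by positivity)
        rw [this] at hg₀
        simp at hg₀
      exact_mod_cast this
    · intro hGH
      obtain ⟨P, hPm, -, -⟩ := hPmem hGH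
      exact ⟨_, hPm⟩
  · intro hGH
    obtain ⟨P, hPm, hPe, hPb⟩ := hPmem hGH
    have hne : (domSet G H).Nonempty := ⟨_, hPm⟩
    have hbdd : BddBelow (domSet G H) := ⟨0, fun c hc => hc.1⟩
    have hInf0 : 0 ≤ sInf (domSet G H) := le_csInf hne (fun c hc => hc.1)
    obtain ⟨⟨ψ⟩, -⟩ := Nat.card_pos_iff.mp hGH
    have hleast : IsLeast (domSet G H) (domExp G H) := by
      unfold domExp
      constructor
      · -- sInf is a member
        refine ⟨hInf0, ?_⟩
        intro n hn T
        have hnR : (0:ℝ) < (n:ℝ) := by exact_mod_cast hn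
        by_cases hG : ∃ x y, G.Adj x y
        · -- G has an edge
          by_cases hh : homDensity H T = 0
          · -- need sInf > 0
            obtain ⟨x, y, hxy⟩ := hG
            have hHedge : H.Adj (ψ x) (ψ y) := ψ.map_rel hxy
            have hh₀ : 0 < homDensity H (finCopy H) := by
              rw [homDensity_finCopy]
              haveI : Nonempty (H →g H) := ⟨SimpleGraph.Hom.id⟩
              have : 0 < Nat.card (H →g H) := Nat.card_pos
              positivity
            have hh₁ : homDensity H (finCopy H) < 1 := by
              rw [homDensity_finCopy, div_lt_one (by positivity)]
              exact card_hom_lt_of_edge H hHedge H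
            have hg₀ : 0 < homDensity G (finCopy H) := by
              rw [homDensity_finCopy]
              have : 0 < (Nat.card (G →g H) : ℝ) := by exact_mod_cast hGH
              positivity
            have hg₁ : homDensity G (finCopy H) < 1 := by
              rw [homDensity_finCopy, div_lt_one (by positivity)]
              exact card_hom_lt_of_edge G hxy H
            have hlg : Real.log (homDensity G (finCopy H)) < 0 := Real.log_neg hg₀ hg₁
            have hlh : Real.log (homDensity H (finCopy H)) < 0 := Real.log_neg hh₀ hh₁
            have hδpos : 0 < Real.log (homDensity G (finCopy H)) /
                Real.log (homDensity H (finCopy H)) := div_pos_of_neg_of_neg hlg hlh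
            have hInfpos : 0 < sInf (domSet G H) := by
              apply lt_of_lt_of_le hδpos
              apply le_csInf hne
              intro c hc
              have hineq := hc.2 (Fintype.card β) hb (finCopy H)
              have hlog : c * Real.log (homDensity H (finCopy H))
                  ≤ Real.log (homDensity G (finCopy H)) := by
                have := Real.log_le_log (Real.rpow_pos_of_pos hh₀ c) hineq
                rwa [Real.log_rpow hh₀] at this
              rw [div_le_iff_of_neg hlh]
              exact hlog
            rw [hh, Real.zero_rpow (ne_of_gt hInfpos)]
            exact homDensity_nonneg_s1 G T
          · -- h > 0 : closure argument
            have hhpos : 0 < homDensity H T :=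
              lt_of_le_of_ne (homDensity_nonneg_s1 H T) (Ne.symm hh)
            set L := {c : ℝ | homDensity H T ^ c ≤ homDensity G T} with hL
            have hcont : Continuous fun c : ℝ => homDensity H T ^ c := by
              have heq : (fun c : ℝ => homDensity H T ^ c)
                  = fun c => Real.exp (Real.log (homDensity H T) * c) :=
                funext fun c => Real.rpow_def_of_pos hhpos c
              rw [heq]
              exact Real.continuous_exp.comp (continuous_const.mul continuous_id)
            have hclosed : IsClosed L := isClosed_le hcont continuous_const
            have hsub : domSet G H ⊆ L := fun c hc => hc.2 n hn T
            have := closure_minimal hsub hclosed (csInf_mem_closure hne hbdd)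
            exact this
        · -- G edgeless
          push_neg at hG
          have hgT : homDensity G T = 1 := by
            unfold homDensity
            rw [card_hom_of_edgeless G hG, Fintype.card_fin]
            rw [div_self (by positivity)]
          rw [hgT]
          apply Real.rpow_le_one (homDensity_nonneg_s1 H T) ?_ hInf0
          apply homDensity_le_one
          rw [Fintype.card_fin]
          exact hn
      · exact fun c hc => csInf_le hbdd hc
    refine ⟨hleast, ?_, ?_⟩
    · intro hba
      have hba' : Real.exp 1 * (Fintype.card β : ℝ) ≤ (Fintype.card α : ℝ) := by
        rw [le_div_iff₀ (Real.exp_pos 1)] at hba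
        linarith [hba]
      calc domExp G H ≤ (P:ℝ) := csInf_le hbdd hPm
        _ ≤ _ := hPb hba'
    · intro _
      calc domExp G H ≤ (P:ℝ) := csInf_le hbdd hPm
        _ ≤ _ := hPe
end
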